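/- arXiv:1611.04527 — 5 statements merged into one kernel-verified Lean document; each statement's English description precedes it below -/
import Mathlib

section
/- The matrix equation AX - XB = C over a field has a solution X if and only if the block matrices [[A, C], [0, B]] and [[A, 0], [0, B]] are similar. -/
/-!
If `AX - XB = C`, conjugating by `[[1, -X], [0, 1]]` clears the corner block. Conversely
(Flanders–Wimmer), write `T₀ = [[A, 0], [0, B]]`, `T₁ = [[A, C], [0, B]]` and `E = [[1, 0], [0, 0]]`.
A similarity `T₁ S = S T₀` makes `Z ↦ Z S` an isomorphism from `{Z | T₀ Z = Z T₁}` onto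
`{Z | T₀ Z = Z T₀}`, so both spaces have the same dimension. The map `Z ↦ Z E`, which keeps the
first block column, sends the first space into the image of the second, with the same kernel on
both; by rank–nullity the two images coincide. The image of the second contains `E = 1 * E`, so
some `Z` with `T₀ Z = Z T₁` has first block column `(1, 0)`, and its `(1, 2)` block solves
`AX - XB = C`.
-/

open Matrix Module

section Intertwiners

variable (R : Type*) {𝒜 : Type*} [CommRing R] [Ring 𝒜] [Algebra R 𝒜]

def intertwiners (P Q : 𝒜) : Submodule R 𝒜 :=
  LinearMap.ker (LinearMap.mulLeft R P - LinearMap.mulRight R Q)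

variable {R}

@[simp]
theorem mem_intertwiners {P Q Z : 𝒜} : Z ∈ intertwiners R P Q ↔ P * Z = Z * Q := by
  simp [intertwiners, sub_eq_zero]

theorem map_intertwiners_of_mul_eq {P Q Q' : 𝒜} (u : 𝒜ˣ) (h : Q * u = u * Q') :
    (intertwiners R P Q).map (u.mulRightLinearEquiv R : 𝒜 →ₗ[R] 𝒜) = intertwiners R P Q' := by
  have hu : ↑u⁻¹ * Q = Q' * ↑u⁻¹ := by
    rw [Units.inv_mul_eq_iff_eq_mul, ← mul_assoc, ← h, mul_assoc, Units.mul_inv, mul_one]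
  ext W
  rw [Submodule.mem_map_equiv, Units.symm_mulRightLinearEquiv, Units.mulRightLinearEquiv_apply,
    mem_intertwiners, mem_intertwiners, mul_assoc W, hu, ← mul_assoc, ← mul_assoc,
    Units.mul_left_inj]

theorem finrank_intertwiners_eq_of_mul_eq {P Q Q' : 𝒜} (u : 𝒜ˣ) (h : Q * u = u * Q') :
    finrank R (intertwiners R P Q) = finrank R (intertwiners R P Q') := by
  rw [← map_intertwiners_of_mul_eq u h, LinearEquiv.finrank_map_eq]

end Intertwiners

theorem Submodule.finrank_map_add_finrank_inf_ker {K V W : Type*} [DivisionRing K]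
    [AddCommGroup V] [Module K V] [AddCommGroup W] [Module K W] (f : V →ₗ[K] W)
    (p : Submodule K V) [FiniteDimensional K p] :
    finrank K (p.map f) + finrank K ↥(p ⊓ LinearMap.ker f) = finrank K p := by
  rw [← (f.domRestrict p).finrank_range_add_finrank_ker, LinearMap.range_domRestrict,
    LinearMap.ker_domRestrict, ← Submodule.finrank_map_subtype_eq p, Submodule.map_comap_subtype,
    inf_comm]

theorem Submodule.map_eq_of_map_le_of_inf_ker_eq {K V W : Type*} [DivisionRing K]
    [AddCommGroup V] [Module K V] [AddCommGroup W] [Module K W] [FiniteDimensional K V]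
    (f : V →ₗ[K] W) {p q : Submodule K V} (hle : p.map f ≤ q.map f)
    (hker : p ⊓ LinearMap.ker f = q ⊓ LinearMap.ker f) (hrank : finrank K p = finrank K q) :
    p.map f = q.map f := by
  refine Submodule.eq_of_le_of_finrank_le hle ?_
  have hp := finrank_map_add_finrank_inf_ker f p
  have hq := finrank_map_add_finrank_inf_ker f q
  rw [hker] at hp
  omega

section Extension

variable {K 𝒜 : Type*} [Field K] [Ring 𝒜] [Algebra K 𝒜] [FiniteDimensional K 𝒜]

theorem exists_mem_intertwiners_mul_eq_of_finrank_eq {P Q Q' E : 𝒜} (hE : IsIdempotentElem E)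
    (hEQ : E * (Q' - Q) = Q' - Q) (hQE : Q' * E = E * Q)
    (hrank : finrank K (intertwiners K P Q') = finrank K (intertwiners K P Q))
    {Z : 𝒜} (hZ : Z ∈ intertwiners K P Q) :
    ∃ Z' ∈ intertwiners K P Q', Z' * E = Z * E := by
  set f := LinearMap.mulRight K E
  have hle : (intertwiners K P Q').map f ≤ (intertwiners K P Q).map f := by
    rintro _ ⟨W, hW, rfl⟩
    rw [SetLike.mem_coe, mem_intertwiners] at hW
    refine ⟨W * E, ?_, ?_⟩
    · rw [SetLike.mem_coe, mem_intertwiners, ← mul_assoc, hW, mul_assoc, hQE, mul_assoc]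
    · simp only [f, LinearMap.mulRight_apply, mul_assoc, hE.eq]
  have hker : intertwiners K P Q' ⊓ LinearMap.ker f = intertwiners K P Q ⊓ LinearMap.ker f := by
    ext W
    simp only [Submodule.mem_inf, mem_intertwiners, LinearMap.mem_ker, f,
      LinearMap.mulRight_apply]
    refine and_congr_left fun hWE => ?_
    have hWQ : W * Q' = W * Q := by
      rw [← sub_eq_zero, ← mul_sub, ← hEQ, ← mul_assoc, hWE, zero_mul]
    rw [hWQ]
  obtain ⟨Z', hZ', hZ'E⟩ : f Z ∈ (intertwiners K P Q').map f := by
    rw [Submodule.map_eq_of_map_le_of_inf_ker_eq f hle hker hrank]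
    exact Submodule.mem_map_of_mem hZ
  exact ⟨Z', hZ', hZ'E⟩

end Extension

namespace Matrix

variable {R K ι κ : Type*} [CommRing R] [Field K] [Fintype ι] [Fintype κ] [DecidableEq ι]
  [DecidableEq κ]

theorem inv_mul_mul_eq_iff {S T T' : Matrix ι ι R} (hS : IsUnit S) :
    S⁻¹ * T * S = T' ↔ T * S = S * T' := by
  have := hS.nonempty_invertible.some
  rw [mul_assoc, inv_mul_eq_iff_eq_mul_of_invertible]

theorem isUnit_fromBlocks_one_one (X : Matrix ι κ R) :
    IsUnit (fromBlocks 1 X 0 1 : Matrix (ι ⊕ κ) (ι ⊕ κ) R) := by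
  simp [isUnit_iff_isUnit_det]

theorem fromBlocks_mul_fromBlocks_one_neg_one {A : Matrix ι ι R} {B : Matrix κ κ R}
    {C X : Matrix ι κ R} (hX : A * X - X * B = C) :
    fromBlocks A C 0 B * fromBlocks 1 (-X) 0 1 = fromBlocks 1 (-X) 0 1 * fromBlocks A 0 0 B := by
  simp only [fromBlocks_multiply, ← hX]
  congr 1 <;> simp
  abel

theorem exists_sub_eq_of_finrank_intertwiners_eq {A : Matrix ι ι K} {B : Matrix κ κ K}
    {C : Matrix ι κ K}
    (hrank : finrank K (intertwiners K (fromBlocks A 0 0 B) (fromBlocks A C 0 B)) =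
      finrank K (intertwiners K (fromBlocks A 0 0 B) (fromBlocks A 0 0 B))) :
    ∃ X : Matrix ι κ K, A * X - X * B = C := by
  obtain ⟨Z, hZ, hZE⟩ := exists_mem_intertwiners_mul_eq_of_finrank_eq
    (E := fromBlocks 1 0 0 0) (by simp [IsIdempotentElem, fromBlocks_multiply])
    (by simp [sub_eq_add_neg, fromBlocks_neg, fromBlocks_add, fromBlocks_multiply])
    (by simp [fromBlocks_multiply]) hrank (Z := 1) (by simp)
  rw [mem_intertwiners, ← fromBlocks_toBlocks Z] at hZ
  rw [← fromBlocks_toBlocks Z] at hZE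
  simp only [fromBlocks_multiply, Matrix.zero_mul, add_zero, zero_add, Matrix.mul_zero,
    fromBlocks_inj, mul_one, Matrix.mul_one, mul_zero, one_mul, and_true, true_and] at hZ hZE
  obtain ⟨-, h12, -⟩ := hZ
  refine ⟨Z.toBlocks₁₂, ?_⟩
  rw [sub_eq_iff_eq_add, h12, hZE.1, Matrix.one_mul, add_comm]

end Matrix

theorem roth_similarity {F : Type*} [Field F] {m n : ℕ}
    (A : Matrix (Fin m) (Fin m) F) (B : Matrix (Fin n) (Fin n) F)
    (C : Matrix (Fin m) (Fin n) F) :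
    (∃ X : Matrix (Fin m) (Fin n) F, A * X - X * B = C) ↔
    (∃ S : Matrix (Fin m ⊕ Fin n) (Fin m ⊕ Fin n) F, IsUnit S ∧
      S⁻¹ * fromBlocks A C 0 B * S = fromBlocks A 0 0 B) := by
  constructor
  · rintro ⟨X, hX⟩
    have hS := isUnit_fromBlocks_one_one (-X)
    exact ⟨_, hS, (inv_mul_mul_eq_iff hS).2 (fromBlocks_mul_fromBlocks_one_neg_one hX)⟩
  · rintro ⟨S, hS, hsim⟩
    exact exists_sub_eq_of_finrank_intertwiners_eq
      (finrank_intertwiners_eq_of_mul_eq hS.unit ((inv_mul_mul_eq_iff hS).1 hsim))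
end

section
/- The matrix equation AX - YB = C over a field has a solution (X, Y) if and only if the block matrices [[A, C], [0, B]] and [[A, 0], [0, B]] are equivalent, i.e., have equal rank. -/
/-!
Both conditions say that `C` maps `ker B` into the column space of `A`.

Given this, `C` modulo `range A` vanishes on `ker B`, so it factors through `B`; lifting the
factor to a matrix `Y` makes every column of `C - Y B` lie in `range A`, which produces `X`.

Projecting the kernel of `[[A, C], [0, B]]` onto the second block has image
`ker B ∩ C⁻¹(range A)` and kernel `ker A × 0`. Hence the nullities of `[[A, C], [0, B]]` and
`[[A, 0], [0, B]]` differ by `dim ker B - dim (ker B ∩ C⁻¹(range A))`, and so do their ranks.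
-/

open Matrix Module Submodule

namespace Submodule

variable {K V W : Type*} [DivisionRing K] [AddCommGroup V] [Module K V] [AddCommGroup W]
  [Module K W]

theorem finrank_map_add_finrank_inf_ker_s1 [FiniteDimensional K V]
    (S : Submodule K V) (f : V →ₗ[K] W) :
    finrank K (S.map f) + finrank K ↥(S ⊓ LinearMap.ker f) = finrank K S := by
  rw [← LinearMap.range_domRestrict, ← map_comap_subtype, finrank_map_subtype_eq,
    ← LinearMap.ker_domRestrict, LinearMap.finrank_range_add_finrank_ker]

end Submodule

namespace LinearMap

variable {K U V W Z : Type*} [DivisionRing K] [AddCommGroup U] [Module K U] [AddCommGroup V]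
  [Module K V] [AddCommGroup W] [Module K W] [AddCommGroup Z] [Module K Z]

theorem exists_comp_eq_of_ker_le (f : V →ₗ[K] Z) (h : V →ₗ[K] W) (hker : ker f ≤ ker h) :
    ∃ g : Z →ₗ[K] W, g ∘ₗ f = h := by
  obtain ⟨g, hg⟩ :=
    exists_extend ((ker f).liftQ h hker ∘ₗ f.quotKerEquivRange.symm.toLinearMap)
  refine ⟨g, ext fun v => ?_⟩
  simpa [quotKerEquivRange_symm_apply_image] using congr($hg ⟨f v, mem_range_self f v⟩)

theorem exists_comp_eq_of_range_le (a : U →ₗ[K] W) (f : V →ₗ[K] W) (hf : range f ≤ range a) :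
    ∃ x : V →ₗ[K] U, a ∘ₗ x = f := by
  obtain ⟨x, hx⟩ := projective_lifting_property a.rangeRestrict
    (f.codRestrict (range a) fun v => hf (mem_range_self f v)) a.surjective_rangeRestrict
  exact ⟨x, ext fun v => congr(((range a).subtype) ($hx v))⟩

theorem exists_comp_add_comp_eq_iff (a : U →ₗ[K] W) (b : V →ₗ[K] Z) (c : V →ₗ[K] W) :
    (∃ (x : V →ₗ[K] U) (y : Z →ₗ[K] W), a ∘ₗ x + y ∘ₗ b = c) ↔
      ker b ≤ (range a).comap c := by
  constructor
  · rintro ⟨x, y, rfl⟩ v hv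
    exact ⟨x v, by simp [mem_ker.1 hv]⟩
  · intro h
    obtain ⟨g, hg⟩ := exists_comp_eq_of_ker_le b ((range a).mkQ ∘ₗ c) fun v hv => by
      simpa using h hv
    obtain ⟨y, hy⟩ := projective_lifting_property (range a).mkQ g (range a).mkQ_surjective
    have hcy : (range a).mkQ ∘ₗ (c - y ∘ₗ b) = 0 := by
      rw [comp_sub, ← comp_assoc, hy, hg, sub_self]
    obtain ⟨x, hx⟩ := exists_comp_eq_of_range_le a (c - y ∘ₗ b) <| by
      simpa only [ker_mkQ] using range_le_ker_iff.2 hcy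
    exact ⟨x, y, by rw [hx, sub_add_cancel]⟩

section FromBlocks

variable {R M₁ M₂ N₁ N₂ : Type*} [Semiring R] [AddCommMonoid M₁] [Module R M₁]
  [AddCommMonoid M₂] [Module R M₂] [AddCommMonoid N₁] [Module R N₁] [AddCommMonoid N₂] [Module R N₂]

def fromBlocks (a : M₁ →ₗ[R] N₁) (b : M₂ →ₗ[R] N₁) (c : M₁ →ₗ[R] N₂) (d : M₂ →ₗ[R] N₂) :
    M₁ × M₂ →ₗ[R] N₁ × N₂ :=
  (a.coprod b).prod (c.coprod d)

@[simp]
theorem fromBlocks_apply (a : M₁ →ₗ[R] N₁) (b : M₂ →ₗ[R] N₁) (c : M₁ →ₗ[R] N₂)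
    (d : M₂ →ₗ[R] N₂) (x : M₁ × M₂) :
    fromBlocks a b c d x = (a x.1 + b x.2, c x.1 + d x.2) := rfl

end FromBlocks

variable (a : U →ₗ[K] W) (b : V →ₗ[K] Z) (c : V →ₗ[K] W)

theorem map_snd_ker_fromBlocks_zero₂₁ :
    (ker (fromBlocks a c 0 b)).map (snd K U V) = ker b ⊓ (range a).comap c := by
  ext y
  simp only [mem_map, mem_ker, fromBlocks_apply, zero_apply, zero_add, Prod.mk_eq_zero,
    snd_apply, Prod.exists, exists_eq_right, mem_inf, mem_comap, mem_range]
  constructor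
  · rintro ⟨x, hx, hy⟩
    exact ⟨hy, -x, by rw [map_neg, neg_eq_iff_add_eq_zero, hx]⟩
  · rintro ⟨hy, x, hx⟩
    exact ⟨-x, by rw [map_neg, hx, neg_add_cancel], hy⟩

theorem ker_fromBlocks_zero₂₁_inf_ker_snd :
    ker (fromBlocks a c 0 b) ⊓ ker (snd K U V) = (ker a).prod ⊥ := by
  ext ⟨x, y⟩
  simp only [mem_inf, mem_ker, fromBlocks_apply, snd_apply, mem_prod, mem_bot]
  constructor
  · rintro ⟨h, rfl⟩
    simpa using h
  · rintro ⟨hx, rfl⟩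
    simp [hx]

theorem finrank_ker_fromBlocks_zero₂₁ [FiniteDimensional K U] [FiniteDimensional K V] :
    finrank K (ker (fromBlocks a c 0 b)) =
      finrank K ↥(ker b ⊓ (range a).comap c) + finrank K ↥((ker a).prod (⊥ : Submodule K V)) := by
  rw [← (ker (fromBlocks a c 0 b)).finrank_map_add_finrank_inf_ker_s1 (snd K U V),
    map_snd_ker_fromBlocks_zero₂₁, ker_fromBlocks_zero₂₁_inf_ker_snd]

theorem finrank_range_fromBlocks_zero₂₁_eq_iff [FiniteDimensional K U] [FiniteDimensional K V] :
    finrank K (range (fromBlocks a c 0 b)) = finrank K (range (fromBlocks a 0 0 b)) ↔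
      ker b ≤ (range a).comap c := by
  have hc := finrank_range_add_finrank_ker (fromBlocks a c 0 b)
  have h0 := finrank_range_add_finrank_ker (fromBlocks a 0 0 b)
  rw [finrank_ker_fromBlocks_zero₂₁] at hc h0
  rw [comap_zero, inf_top_eq] at h0
  rw [← inf_eq_left]
  constructor
  · intro h
    exact eq_of_le_of_finrank_eq inf_le_left (by omega)
  · intro h
    rw [h] at hc
    omega

end LinearMap

namespace Matrix

variable {R : Type*} {l m n o : Type*}

theorem mulVecLin_fromBlocks [CommSemiring R] [Fintype l] [Fintype n] (A : Matrix m l R)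
    (B : Matrix m n R) (C : Matrix o l R) (D : Matrix o n R) :
    (fromBlocks A B C D).mulVecLin =
      (LinearEquiv.sumArrowLequivProdArrow m o R R).symm.toLinearMap ∘ₗ
        LinearMap.fromBlocks A.mulVecLin B.mulVecLin C.mulVecLin D.mulVecLin ∘ₗ
          (LinearEquiv.sumArrowLequivProdArrow l n R R).toLinearMap := by
  ext v (i | i) <;>
    simp [mulVec, dotProduct, Fintype.sum_sum_type, LinearEquiv.sumArrowLequivProdArrow]

theorem rank_fromBlocks [CommSemiring R] [Fintype l] [Fintype n] (A : Matrix m l R)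
    (B : Matrix m n R) (C : Matrix o l R) (D : Matrix o n R) :
    (fromBlocks A B C D).rank =
      finrank R
        (LinearMap.range (LinearMap.fromBlocks A.mulVecLin B.mulVecLin C.mulVecLin D.mulVecLin)) := by
  rw [Matrix.rank, mulVecLin_fromBlocks, LinearMap.range_comp, LinearEquiv.finrank_map_eq,
    LinearMap.range_comp_of_range_eq_top _ (LinearEquiv.range _)]

theorem exists_mul_sub_mul_eq_iff [CommRing R] [Fintype l] [Fintype n] [Fintype o]
    [DecidableEq l] [DecidableEq n] [DecidableEq o]
    (A : Matrix m l R) (B : Matrix o n R) (C : Matrix m n R) :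
    (∃ (X : Matrix l n R) (Y : Matrix m o R), A * X - Y * B = C) ↔
      ∃ (x : (n → R) →ₗ[R] l → R) (y : (o → R) →ₗ[R] m → R),
        A.mulVecLin ∘ₗ x + y ∘ₗ B.mulVecLin = C.mulVecLin := by
  simp only [← toLin'_apply']
  constructor
  · rintro ⟨X, Y, rfl⟩
    exact ⟨toLin' X, -toLin' Y, by simp [toLin'_mul, sub_eq_add_neg]⟩
  · rintro ⟨x, y, h⟩
    refine ⟨LinearMap.toMatrix' x, -LinearMap.toMatrix' y, toLin'.injective ?_⟩
    simp [toLin'_mul, ← h]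

end Matrix

theorem roth_equivalence {F : Type*} [Field F] {m n p q : ℕ}
    (A : Matrix (Fin m) (Fin p) F) (B : Matrix (Fin q) (Fin n) F)
    (C : Matrix (Fin m) (Fin n) F) :
    (∃ (X : Matrix (Fin p) (Fin n) F) (Y : Matrix (Fin m) (Fin q) F),
      A * X - Y * B = C) ↔
    (fromBlocks A C 0 B).rank = (fromBlocks A 0 0 B).rank := by
  rw [exists_mul_sub_mul_eq_iff, LinearMap.exists_comp_add_comp_eq_iff, rank_fromBlocks,
    rank_fromBlocks, mulVecLin_zero, mulVecLin_zero,
    LinearMap.finrank_range_fromBlocks_zero₂₁_eq_iff]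
end

section
/- The complex matrix equation X - AXB = C has a unique solution if and only if λμ ≠ 1 for every eigenvalue λ of A and every eigenvalue μ of B. -/
/-!
If `X ≠ 0` solves `X = AXB`, the solution space is the eigenspace for `1` of `X ↦ AXB`, which
commutes with `X ↦ XB`; so it contains a common eigenvector `Y` with `YB = μY`, and then
`AY = μ⁻¹Y`. Conversely, if `Av = λv`, `wᵀB = μwᵀ` and `λμ = 1`, the rank-one matrix `vwᵀ` is
fixed by `X ↦ AXB`. Since `X ↦ X - AXB` is an endomorphism of a finite-dimensional space, unique
solvability for one right-hand side is the same as injectivity.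
-/

open Matrix

namespace Module.End

variable {K V : Type*} [Field K] [AddCommGroup V] [Module K V]

theorem exists_hasEigenvector_of_commute [IsAlgClosed K] [FiniteDimensional K V]
    {f g : End K V} (hfg : Commute f g) {a : K} (ha : f.HasEigenvalue a) :
    ∃ b v, f.HasEigenvector a v ∧ g.HasEigenvector b v := by
  have : Nontrivial (f.eigenspace a) := Submodule.nontrivial_iff_ne_bot.mpr ha
  obtain ⟨b, hb⟩ := exists_eigenvalue (g.restrict (mapsTo_genEigenspace_of_comm hfg a 1))
  obtain ⟨w, hw⟩ := hb.exists_hasEigenvector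
  have hw0 : (w : V) ≠ 0 := by simpa using hw.2
  exact ⟨b, w, ⟨w.2, hw0⟩, ⟨mem_eigenspace_iff.mpr congr($hw.apply_eq_smul), hw0⟩⟩

end Module.End

theorem LinearMap.existsUnique_apply_eq_iff_injective {K V : Type*} [DivisionRing K]
    [AddCommGroup V] [Module K V] [FiniteDimensional K V] (f : V →ₗ[K] V) (c : V) :
    (∃! x, f x = c) ↔ Function.Injective f := by
  refine ⟨fun ⟨x₀, hx₀, huniq⟩ x y hxy => ?_, fun hf => ?_⟩
  · have : x₀ + (x - y) = x₀ :=
      huniq _ (by simp only [map_add, map_sub, hxy, sub_self, add_zero, hx₀])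
    simpa [sub_eq_zero] using this
  · obtain ⟨x₀, hx₀⟩ := LinearMap.injective_iff_surjective.mp hf c
    exact ⟨x₀, hx₀, fun y hy => hf (hy.trans hx₀.symm)⟩

namespace Matrix

variable {R K : Type*} [CommRing R] [Field K] {l m n : Type*}
  [Fintype m] [DecidableEq m] [Fintype n] [DecidableEq n]

theorem mem_spectrum_of_mul_eq_smul {A : Matrix m m R} {X : Matrix m l R} {a : R}
    (hX : X ≠ 0) (h : A * X = a • X) : a ∈ spectrum R A := by
  rw [spectrum.mem_iff, isUnit_iff_isUnit_det]
  intro hu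
  refine hX ?_
  have : (algebraMap R _ a - A) * X = 0 := by
    rw [Matrix.sub_mul, Algebra.algebraMap_eq_smul_one, smul_mul, Matrix.one_mul, h, sub_self]
  rw [← nonsing_inv_mul_cancel_left _ X hu, this, Matrix.mul_zero]

theorem mem_spectrum_of_mul_eq_smul' {B : Matrix n n R} {X : Matrix l n R} {b : R}
    (hX : X ≠ 0) (h : X * B = b • X) : b ∈ spectrum R B := by
  rw [spectrum.mem_iff, isUnit_iff_isUnit_det]
  intro hu
  refine hX ?_
  have : X * (algebraMap R _ b - B) = 0 := by
    rw [Matrix.mul_sub, Algebra.algebraMap_eq_smul_one, Matrix.mul_smul, Matrix.mul_one, h,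
      sub_self]
  rw [← mul_nonsing_inv_cancel_right _ X hu, this, Matrix.zero_mul]

theorem exists_mulVec_eq_smul_of_mem_spectrum {A : Matrix m m K} {a : K}
    (ha : a ∈ spectrum K A) : ∃ v ≠ 0, A *ᵥ v = a • v := by
  rw [spectrum.mem_iff, isUnit_iff_isUnit_det, isUnit_iff_ne_zero, not_not,
    ← exists_mulVec_eq_zero_iff] at ha
  obtain ⟨v, hv, hav⟩ := ha
  refine ⟨v, hv, ?_⟩
  rw [sub_mulVec, Algebra.algebraMap_eq_smul_one, smul_mulVec, one_mulVec, sub_eq_zero] at hav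
  exact hav.symm

theorem exists_vecMul_eq_smul_of_mem_spectrum {B : Matrix n n K} {b : K}
    (hb : b ∈ spectrum K B) : ∃ w ≠ 0, w ᵥ* B = b • w := by
  rw [spectrum.mem_iff, isUnit_iff_isUnit_det, isUnit_iff_ne_zero, not_not,
    ← exists_vecMul_eq_zero_iff] at hb
  obtain ⟨w, hw, hwb⟩ := hb
  refine ⟨w, hw, ?_⟩
  rw [vecMul_sub, Algebra.algebraMap_eq_smul_one, vecMul_smul, vecMul_one, sub_eq_zero] at hwb
  exact hwb.symm

theorem exists_mul_mul_eq_self_of_mem_spectrum {A : Matrix m m K} {B : Matrix n n K} {a b : K}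
    (ha : a ∈ spectrum K A) (hb : b ∈ spectrum K B) (hab : a * b = 1) :
    ∃ X : Matrix m n K, X ≠ 0 ∧ A * X * B = X := by
  obtain ⟨v, hv, hAv⟩ := exists_mulVec_eq_smul_of_mem_spectrum ha
  obtain ⟨w, hw, hwB⟩ := exists_vecMul_eq_smul_of_mem_spectrum hb
  refine ⟨vecMulVec v w, ?_, ?_⟩
  · obtain ⟨i, hi⟩ := Function.ne_iff.mp hv
    obtain ⟨j, hj⟩ := Function.ne_iff.mp hw
    exact fun h => mul_ne_zero hi hj congr($h i j)
  · rw [mul_vecMulVec, vecMulVec_mul, hAv, hwB, smul_vecMulVec, vecMulVec_smul, smul_smul,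
      hab, one_smul]

theorem exists_mem_spectrum_of_mul_mul_eq_self [IsAlgClosed K] {A : Matrix m m K}
    {B : Matrix n n K} {X : Matrix m n K} (hX : X ≠ 0) (hAXB : A * X * B = X) :
    ∃ a ∈ spectrum K A, ∃ b ∈ spectrum K B, a * b = 1 := by
  set T := mulLeftLinearMap n K A ∘ₗ mulRightLinearMap m K B
  have hT : Module.End.HasEigenvalue T 1 := Module.End.hasEigenvalue_of_hasEigenvector
    ⟨Module.End.mem_eigenspace_iff.mpr (by simpa [T, Matrix.mul_assoc] using hAXB), hX⟩
  have hcomm : Commute T (mulRightLinearMap m K B) :=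
    LinearMap.ext fun Y => by simp [T, Matrix.mul_assoc]
  obtain ⟨b, Y, hTY, hYB⟩ := Module.End.exists_hasEigenvector_of_commute hcomm hT
  have hY : A * (Y * B) = Y := by simpa [T] using hTY.apply_eq_smul
  have hYb : Y * B = b • Y := hYB.apply_eq_smul
  have hbAY : b • (A * Y) = Y := by rw [← Matrix.mul_smul, ← hYb, hY]
  have hb : b ≠ 0 := by
    rintro rfl
    exact hYB.2 (by simpa using hbAY.symm)
  have hAY : A * Y = b⁻¹ • Y := (eq_inv_smul_iff₀ hb).mpr hbAY
  exact ⟨b⁻¹, mem_spectrum_of_mul_eq_smul hYB.2 hAY, b, mem_spectrum_of_mul_eq_smul' hYB.2 hYb,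
    inv_mul_cancel₀ hb⟩

theorem exists_ne_zero_mul_mul_eq_self_iff [IsAlgClosed K] {A : Matrix m m K}
    {B : Matrix n n K} :
    (∃ X : Matrix m n K, X ≠ 0 ∧ A * X * B = X) ↔
      ∃ a ∈ spectrum K A, ∃ b ∈ spectrum K B, a * b = 1 :=
  ⟨fun ⟨_, hX, hAXB⟩ => exists_mem_spectrum_of_mul_mul_eq_self hX hAXB,
    fun ⟨_, ha, _, hb, hab⟩ => exists_mul_mul_eq_self_of_mem_spectrum ha hb hab⟩

def steinMap (A : Matrix m m R) (B : Matrix n n R) : Matrix m n R →ₗ[R] Matrix m n R where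
  toFun X := X - A * X * B
  map_add' X Y := by simp only [Matrix.mul_add, Matrix.add_mul]; abel
  map_smul' c X := by simp only [Matrix.mul_smul, Matrix.smul_mul, smul_sub, RingHom.id_apply]

theorem steinMap_injective_iff [IsAlgClosed K] {A : Matrix m m K} {B : Matrix n n K} :
    Function.Injective (steinMap A B) ↔
      ∀ a ∈ spectrum K A, ∀ b ∈ spectrum K B, a * b ≠ 1 := by
  rw [injective_iff_map_eq_zero]
  simpa [steinMap, sub_eq_zero, eq_comm, not_imp_comm]
    using (exists_ne_zero_mul_mul_eq_self_iff (A := A) (B := B)).not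

end Matrix

theorem stein_unique_solution {m n : ℕ}
    (A : Matrix (Fin m) (Fin m) ℂ) (B : Matrix (Fin n) (Fin n) ℂ)
    (C : Matrix (Fin m) (Fin n) ℂ) :
    (∃! X : Matrix (Fin m) (Fin n) ℂ, X - A * X * B = C) ↔
    ∀ lam ∈ spectrum ℂ A, ∀ mu ∈ spectrum ℂ B, lam * mu ≠ 1 :=
  ((steinMap A B).existsUnique_apply_eq_iff_injective C).trans steinMap_injective_iff
end

section
/- Every nonidentical involutive automorphism of the quaternion algebra ℍ is conjugation by a purely imaginary unit quaternion; that is, it has the form h ↦ u⁻¹hu for some quaternion u with u² = -1, and in a suitable orthonormal basis i, j, k of the imaginary quaternions it acts as a + bi + cj + dk ↦ a + bi - cj - dk. -/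
/-!
A ring automorphism `σ` of `ℍ` maps the centre `ℝ` to itself, where it is the identity because
`ℝ` has no nontrivial ring endomorphisms; so `σ` is `ℝ`-linear. Applying `σ` to the identity
`q² = 2 re(q) q - |q|²` shows that every `q` with `σ q = -q` is purely imaginary. If these `q`
formed a single line `ℝ j`, then for every `y` both `y - σ y` and `j (y + σ y)` would be real
multiples of `j`, so `y` would commute with `j` and `j` would be central, hence real. So there are
orthogonal purely imaginary units `j, k` negated by `σ`; with `i = j k`, the maps `σ` and
`h ↦ i⁻¹ h i` agree on the quaternion basis `j, k, i`, hence everywhere.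
-/

open Quaternion

namespace Quaternion

theorem eq_coe_re_of_forall_commute {x : ℍ[ℝ]} (hx : ∀ y : ℍ[ℝ], Commute y x) : x = x.re := by
  have hi := (hx ((equivProd ℝ).symm (0, 1, 0, 0))).eq
  have hj := (hx ((equivProd ℝ).symm (0, 0, 1, 0))).eq
  simp only [Quaternion.ext_iff, re_mul, imI_mul, imJ_mul, imK_mul, re_equivProd_symm_apply,
    imI_equivProd_symm_apply, imJ_equivProd_symm_apply, imK_equivProd_symm_apply] at hi hj
  obtain ⟨-, -, hiJ, hiK⟩ := hi
  obtain ⟨-, -, -, hjK⟩ := hj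
  apply Quaternion.ext <;> simp only [re_coe, imI_coe, imJ_coe, imK_coe] <;> linarith

theorem ringEquiv_apply_coe (σ : ℍ[ℝ] ≃+* ℍ[ℝ]) (r : ℝ) : σ r = r := by
  have central (s : ℝ) : σ s = (σ s).re := eq_coe_re_of_forall_commute fun y ↦ by
    simpa using ((coe_commute s (σ.symm y)).map σ).symm
  let φ : ℝ →+* ℝ :=
    { toFun s := (σ s).re
      map_one' := by simp
      map_mul' a b := by rw [coe_mul, map_mul, central a, central b, ← coe_mul]; simp only [re_coe]
      map_zero' := by simp
      map_add' a b := by simp }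
  rw [central r]
  exact congrArg _ (RingHom.congr_fun (Subsingleton.elim φ (RingHom.id ℝ)) r)

theorem mul_comm_eq_neg_of_re_mul_eq_zero {R : Type*} [CommRing R] {a b : ℍ[R]} (ha : a.re = 0)
    (hb : b.re = 0) (hab : (a * b).re = 0) : b * a = -(a * b) := by
  simp only [re_mul, ha, hb] at hab
  apply Quaternion.ext <;>
    simp only [re_mul, imI_mul, imJ_mul, imK_mul, re_neg, imI_neg, imJ_neg, imK_neg, ha, hb]
  · linear_combination 2 * hab
  all_goals ring

theorem exists_smul_mul_self_eq_neg_one {w : ℍ[ℝ]} (hw : w.re = 0) (hw0 : w ≠ 0) :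
    ∃ r : ℝ, r • w * (r • w) = -1 := by
  have hN : 0 < normSq w := normSq_nonneg.lt_of_ne' (normSq_ne_zero.mpr hw0)
  refine ⟨(√(normSq w))⁻¹, ?_⟩
  rw [smul_mul_smul, ← sq w, sq_eq_neg_normSq.mpr hw, smul_neg, ← coe_mul_eq_smul, ← coe_mul,
    ← sq, inv_pow, Real.sq_sqrt hN.le, inv_mul_cancel₀ hN.ne', coe_one]

theorem mul_self_eq_coe_mul_sub (q : ℍ[ℝ]) : q * q = ((2 * q.re : ℝ) : ℍ[ℝ]) * q - normSq q := by
  rw [← self_mul_star, star_eq_two_re_sub, mul_sub, ← coe_commutes, sub_sub_cancel]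

section AntiFixed

variable (f : ℍ[ℝ] →ₐ[ℝ] ℍ[ℝ])

theorem re_eq_zero_of_apply_eq_neg {q : ℍ[ℝ]} (hq : f q = -q) : q.re = 0 := by
  have h := congrArg f (mul_self_eq_coe_mul_sub q)
  rw [map_mul, hq, map_sub, map_mul, hq, ← algebraMap_def, f.commutes, f.commutes, neg_mul_neg,
    algebraMap_def, mul_self_eq_coe_mul_sub] at h
  have h := congrArg QuaternionAlgebra.re h
  simp only [coe_mul_eq_smul, re_sub, re_smul, re_neg, re_coe, smul_eq_mul] at h
  nlinarith

theorem exists_apply_eq_neg_ne_smul (hf : Function.Involutive f) {j : ℍ[ℝ]} (hj : j * j = -1)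
    (hfj : f j = -j) : ∃ q, f q = -q ∧ ∀ t : ℝ, q ≠ t • j := by
  by_contra! hall
  have hcomm (y : ℍ[ℝ]) : Commute y j := by
    obtain ⟨t, ht⟩ := hall (y - f y) (by rw [map_sub, hf y, neg_sub])
    obtain ⟨s, hs⟩ := hall (j * (y + f y)) (by rw [map_mul, map_add, hf y, hfj, neg_mul, add_comm])
    have hfix : y + f y = s := by
      calc y + f y = -(j * j) * (y + f y) := by rw [hj, neg_neg, one_mul]
        _ = s := by rw [neg_mul, mul_assoc, hs, mul_smul_comm, hj, smul_neg, neg_neg,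
          ← coe_mul_eq_smul, mul_one]
    have htwice : Commute (y + y) j := by
      rw [show y + y = (y + f y) + (y - f y) by abel, hfix, ht]
      exact (coe_commute s j).add_left ((Commute.refl j).smul_left t)
    simpa only [← two_smul ℝ, smul_smul, inv_mul_cancel₀ (two_ne_zero (α := ℝ)), one_smul] using htwice.smul_left (2⁻¹ : ℝ)
  have hre := congrArg QuaternionAlgebra.re hj
  rw [eq_coe_re_of_forall_commute hcomm, ← coe_mul] at hre
  simp only [re_coe, re_neg, re_one] at hre
  nlinarith

theorem exists_anticommuting_pair_of_involutive (hf : Function.Involutive f)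
    (hne : f ≠ AlgHom.id ℝ ℍ[ℝ]) :
    ∃ j k : ℍ[ℝ], j * j = -1 ∧ k * k = -1 ∧ k * j = -(j * k) ∧ f j = -j ∧ f k = -k := by
  have normalize (q : ℍ[ℝ]) (hq : f q = -q) (hq0 : q ≠ 0) :
      ∃ r : ℝ, r • q * (r • q) = -1 ∧ f (r • q) = -(r • q) := by
    obtain ⟨r, hr⟩ := exists_smul_mul_self_eq_neg_one (re_eq_zero_of_apply_eq_neg f hq) hq0
    exact ⟨r, hr, by rw [map_smul, hq, smul_neg]⟩
  obtain ⟨x, hx⟩ : ∃ x, f x ≠ x := by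
    by_contra! h
    exact hne (AlgHom.ext h)
  obtain ⟨r, hj, hfj⟩ :=
    normalize (x - f x) (by rw [map_sub, hf x, neg_sub]) (sub_ne_zero.mpr hx.symm)
  set j := r • (x - f x)
  obtain ⟨q, hfq, hq⟩ := exists_apply_eq_neg_ne_smul f hf hj hfj
  -- Gram–Schmidt: `(q * j).re` is minus the inner product of `q` and the unit `j`.
  set w := q + (q * j).re • j
  have hw0 : w ≠ 0 := fun h ↦ hq (-(q * j).re) (by rw [neg_smul, ← add_eq_zero_iff_eq_neg]; exact h)
  have hfw : f w = -w := by rw [map_add, map_smul, hfq, hfj, smul_neg, neg_add]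
  have hwj : (w * j).re = 0 := by simp [w, add_mul, hj]
  obtain ⟨s, hk, hfk⟩ := normalize w hfw hw0
  refine ⟨j, s • w, hj, hk, ?_, hfj, hfk⟩
  have hjk := mul_comm_eq_neg_of_re_mul_eq_zero (re_eq_zero_of_apply_eq_neg f hfk)
    (re_eq_zero_of_apply_eq_neg f hfj) (by rw [smul_mul_assoc, re_smul, hwj, smul_zero])
  exact neg_eq_iff_eq_neg.mp hjk.symm

end AntiFixed

end Quaternion

namespace QuaternionAlgebra.Basis

variable {R A : Type*} [CommRing R] [Ring A] [Algebra R A]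

@[simps i j k]
def ofAnticommute {j k : A} (hj : j * j = -1) (hk : k * k = -1) (hkj : k * j = -(j * k)) :
    Basis A (-1 : R) 0 (-1) where
  i := j
  j := k
  k := j * k
  i_mul_i := by simp [hj]
  j_mul_j := by simp [hk]
  i_mul_j := rfl
  j_mul_i := by simp [hkj]

end QuaternionAlgebra.Basis

namespace Quaternion

theorem algHom_ext_of_basis {A : Type*} [Ring A] [Algebra ℝ A]
    (B : QuaternionAlgebra.Basis ℍ[ℝ] (-1 : ℝ) 0 (-1)) {f g : ℍ[ℝ] →ₐ[ℝ] A}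
    (hi : f B.i = g B.i) (hj : f B.j = g B.j) : f = g := by
  let φ : ℍ[ℝ] →ₐ[ℝ] ℍ[ℝ] := B.liftHom
  have hsurj : Function.Surjective φ :=
    (LinearMap.injective_iff_surjective (f := φ.toLinearMap)).mp φ.toRingHom.injective
  have hcomp : f.comp φ = g.comp φ := by
    have hφi : φ (QuaternionAlgebra.Basis.self ℝ).i = B.i :=
      congrArg QuaternionAlgebra.Basis.i (QuaternionAlgebra.lift.symm_apply_apply B)
    have hφj : φ (QuaternionAlgebra.Basis.self ℝ).j = B.j :=
      congrArg QuaternionAlgebra.Basis.j (QuaternionAlgebra.lift.symm_apply_apply B)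
    ext
    · show f (φ _) = g (φ _)
      rw [hφi, hi]
    · show f (φ _) = g (φ _)
      rw [hφj, hj]
  refine AlgHom.ext fun x ↦ ?_
  obtain ⟨y, rfl⟩ := hsurj x
  exact AlgHom.congr_fun hcomp y

theorem algHom_apply_eq_inv_mul_mul (B : QuaternionAlgebra.Basis ℍ[ℝ] (-1 : ℝ) 0 (-1))
    (f : ℍ[ℝ] →ₐ[ℝ] ℍ[ℝ]) (hi : f B.i = -B.i) (hj : f B.j = -B.j) (x : ℍ[ℝ]) :
    f x = B.k⁻¹ * x * B.k := by
  have hk : B.k * B.k = -1 := by simp [B.k_mul_k]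
  have hkinv : B.k⁻¹ = -B.k := inv_eq_of_mul_eq_one_right (by rw [mul_neg, hk, neg_neg])
  have hk0 : B.k ≠ 0 := fun h ↦ by simp [h] at hk
  let conj := MulSemiringAction.toAlgHom ℝ ℍ[ℝ] (ConjAct.toConjAct (Units.mk0 B.k hk0)⁻¹)
  have hconj (y : ℍ[ℝ]) : conj y = B.k⁻¹ * y * B.k := by simp [conj, ConjAct.units_smul_def]
  have hf : f = conj := algHom_ext_of_basis B
    (by simp [hi, hconj, hkinv, B.k_mul_i, B.j_mul_k])
    (by simp [hj, hconj, hkinv, B.k_mul_j, B.i_mul_k])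
  rw [hf, hconj]

end Quaternion

theorem involutive_automorphism_form (σ : ℍ[ℝ] ≃+* ℍ[ℝ])
    (hinv : ∀ h : ℍ[ℝ], σ (σ h) = h) (hne : σ ≠ RingEquiv.refl ℍ[ℝ]) :
    ∃ i' j' k' : ℍ[ℝ],
      i' ^ 2 = -1 ∧ j' ^ 2 = -1 ∧ k' ^ 2 = -1 ∧
      i' * j' = k' ∧ j' * k' = i' ∧ k' * i' = j' ∧
      (∀ h : ℍ[ℝ], σ h = i'⁻¹ * h * i') ∧
      (∀ a b c d : ℝ,
        σ (algebraMap ℝ ℍ[ℝ] a + b • i' + c • j' + d • k') =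
          algebraMap ℝ ℍ[ℝ] a + b • i' - c • j' - d • k') := by
  let f : ℍ[ℝ] ≃ₐ[ℝ] ℍ[ℝ] := AlgEquiv.ofRingEquiv (f := σ) (ringEquiv_apply_coe σ)
  obtain ⟨j, k, hj, hk, hkj, hfj, hfk⟩ := exists_anticommuting_pair_of_involutive f.toAlgHom hinv
    fun h ↦ hne (RingEquiv.ext (AlgHom.congr_fun h))
  let B : QuaternionAlgebra.Basis ℍ[ℝ] (-1 : ℝ) 0 (-1) := .ofAnticommute hj hk hkj
  change f j = -j at hfj
  change f k = -k at hfk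
  have hfi : f (j * k) = j * k := by rw [map_mul, hfj, hfk, neg_mul_neg]
  refine ⟨j * k, j, k, (sq _).trans (B.k_mul_k.trans (by simp)), (sq j).trans hj, (sq k).trans hk,
    B.k_mul_i.trans (by simp [B]), rfl, B.j_mul_k.trans (by simp [B]),
    algHom_apply_eq_inv_mul_mul B f.toAlgHom hfj hfk, fun a b c d ↦ ?_⟩
  change f _ = _
  rw [map_add, map_add, map_add, f.commutes, map_smul, map_smul, map_smul, hfi, hfj, hfk,
    smul_neg, smul_neg, ← sub_eq_add_neg, ← sub_eq_add_neg]
end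

section
/- Let σ be the involutive automorphism of ℍ with σ(a+bi+cj+dk) = a+bi+ε(cj+dk) for ε ∈ {1,-1}, applied entrywise to matrices. If complex matrices A, B (viewed as quaternion matrices over the subfield ℝ+ℝi) and complex matrices Z₁, Z₂ satisfy Z₁ - AZ₁B = C₁ and Z₂ - εAZ₂B̄ = C₂, then the quaternion matrix X = Z₁ + Z₂j satisfies X - A·σ(X)·B = C₁ + C₂j. -/
/-!
The map `σ` fixes the complex subfield `ℝ + ℝi` and sends `j` to `εj`, while `j z = z̄ j` for
complex `z`. Hence for `X = Z₁ + Z₂ j` we get `σ(X) = Z₁ + εZ₂ j` and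
`A σ(X) B = A Z₁ B + ε A Z₂ B̄ j`, so `X - A σ(X) B` splits into a complex part and a `j` part,
which are the left-hand sides of the two complex equations.
-/

open Matrix Quaternion

/-- The embedding of ℂ into ℍ as the subfield ℝ + ℝi. -/
def cq (z : ℂ) : ℍ[ℝ] := ⟨z.re, z.im, 0, 0⟩

/-- The quaternion unit j. -/
def jq : ℍ[ℝ] := ⟨0, 0, 1, 0⟩

@[simp] lemma re_cq (z : ℂ) : (cq z).re = z.re := rfl
@[simp] lemma imI_cq (z : ℂ) : (cq z).imI = z.im := rfl
@[simp] lemma imJ_cq (z : ℂ) : (cq z).imJ = 0 := rfl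
@[simp] lemma imK_cq (z : ℂ) : (cq z).imK = 0 := rfl
@[simp] lemma re_jq : jq.re = 0 := rfl
@[simp] lemma imI_jq : jq.imI = 0 := rfl
@[simp] lemma imJ_jq : jq.imJ = 1 := rfl
@[simp] lemma imK_jq : jq.imK = 0 := rfl

def cqHom : ℂ →+* ℍ[ℝ] where
  toFun := cq
  map_one' := by ext <;> simp
  map_zero' := by ext <;> simp
  map_add' z w := by ext <;> simp
  map_mul' z w := by ext <;> simp

lemma jq_mul_cq (z : ℂ) : jq * cq z = cq (starRingEnd ℂ z) * jq := by
  ext <;> simp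

lemma cq_add_cq_mul_jq (z w : ℂ) : cq z + cq w * jq = ⟨z.re, z.im, w.re, w.im⟩ := by
  ext <;> simp

lemma apply_cq_add_cq_mul_jq {ε : ℝ} {σ : ℍ[ℝ] → ℍ[ℝ]}
    (hσ : ∀ q : ℍ[ℝ], σ q = ⟨q.re, q.imI, ε * q.imJ, ε * q.imK⟩) (z w : ℂ) :
    σ (cq z + cq w * jq) = cq z + cq (ε * w) * jq := by
  rw [hσ, cq_add_cq_mul_jq, cq_add_cq_mul_jq]
  ext <;> simp

section Matrix

variable {l m n : Type*}

lemma map_cq_mul [Fintype m] (L : Matrix l m ℂ) (M : Matrix m n ℂ) :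
    (L * M).map cq = L.map cq * M.map cq :=
  Matrix.map_mul (f := cqHom)

lemma map_cq_sub (M N : Matrix m n ℂ) : (M - N).map cq = M.map cq - N.map cq :=
  Matrix.map_sub cq (map_sub cqHom) M N

variable [Fintype n] [DecidableEq n]

lemma mul_smul_one_jq_apply (M : Matrix m n ℍ[ℝ]) (i : m) (k : n) :
    (M * jq • (1 : Matrix n n ℍ[ℝ])) i k = M i k * jq := by
  simp [Matrix.mul_apply, Matrix.one_apply]

lemma smul_one_jq_mul_map_cq (B : Matrix n n ℂ) :
    jq • (1 : Matrix n n ℍ[ℝ]) * B.map cq =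
      (B.map (starRingEnd ℂ)).map cq * jq • (1 : Matrix n n ℍ[ℝ]) := by
  refine Matrix.ext fun i k => ?_
  rw [mul_smul_one_jq_apply, Matrix.smul_mul, Matrix.one_mul]
  exact jq_mul_cq (B i k)

lemma map_cq_mul_smul_one_jq_mul_map_cq [Fintype l] (A : Matrix m l ℂ) (Q : Matrix l n ℂ)
    (B : Matrix n n ℂ) :
    A.map cq * (Q.map cq * jq • (1 : Matrix n n ℍ[ℝ])) * B.map cq =
      (A * Q * B.map (starRingEnd ℂ)).map cq * jq • (1 : Matrix n n ℍ[ℝ]) := by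
  rw [Matrix.mul_assoc, Matrix.mul_assoc, smul_one_jq_mul_map_cq, map_cq_mul, map_cq_mul]
  simp only [Matrix.mul_assoc]

lemma map_map_cq_add_mul_smul_one_jq {ε : ℝ} {σ : ℍ[ℝ] → ℍ[ℝ]}
    (hσ : ∀ q : ℍ[ℝ], σ q = ⟨q.re, q.imI, ε * q.imJ, ε * q.imK⟩) (P Q : Matrix m n ℂ) :
    (P.map cq + Q.map cq * jq • (1 : Matrix n n ℍ[ℝ])).map σ =
      P.map cq + ((ε : ℂ) • Q).map cq * jq • (1 : Matrix n n ℍ[ℝ]) := by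
  refine Matrix.ext fun i k => ?_
  simp only [Matrix.map_apply, Matrix.add_apply, mul_smul_one_jq_apply, Matrix.smul_apply,
    smul_eq_mul]
  exact apply_cq_add_cq_mul_jq hσ (P i k) (Q i k)

end Matrix

theorem complex_pair_gives_quaternion_solution_general {m n : ℕ}
    (ε : ℝ)
    (σ : ℍ[ℝ] → ℍ[ℝ])
    (hσ : ∀ q : ℍ[ℝ], σ q = ⟨q.re, q.imI, ε * q.imJ, ε * q.imK⟩)
    (A : Matrix (Fin m) (Fin m) ℂ) (B : Matrix (Fin n) (Fin n) ℂ)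
    (C₁ C₂ Z₁ Z₂ : Matrix (Fin m) (Fin n) ℂ)
    (h1 : Z₁ - A * Z₁ * B = C₁)
    (h2 : Z₂ - (ε : ℂ) • (A * Z₂ * B.map (starRingEnd ℂ)) = C₂) :
    (Z₁.map cq + Z₂.map cq * jq • (1 : Matrix (Fin n) (Fin n) ℍ[ℝ])) -
        A.map cq *
          ((Z₁.map cq + Z₂.map cq * jq • (1 : Matrix (Fin n) (Fin n) ℍ[ℝ])).map σ) *
          B.map cq =
      C₁.map cq + C₂.map cq * jq • (1 : Matrix (Fin n) (Fin n) ℍ[ℝ]) := by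
  rw [map_map_cq_add_mul_smul_one_jq hσ, Matrix.mul_add, Matrix.add_mul,
    map_cq_mul_smul_one_jq_mul_map_cq, Matrix.mul_smul A (ε : ℂ) Z₂, Matrix.smul_mul,
    ← map_cq_mul, ← map_cq_mul, ← h1, ← h2, map_cq_sub, map_cq_sub, Matrix.sub_mul]
  abel

theorem complex_pair_gives_quaternion_solution {m n : ℕ}
    (ε : ℝ) (hε : ε = 1 ∨ ε = -1)
    (σ : ℍ[ℝ] → ℍ[ℝ])
    (hσ : ∀ q : ℍ[ℝ], σ q = ⟨q.re, q.imI, ε * q.imJ, ε * q.imK⟩)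
    (A : Matrix (Fin m) (Fin m) ℂ) (B : Matrix (Fin n) (Fin n) ℂ)
    (C₁ C₂ Z₁ Z₂ : Matrix (Fin m) (Fin n) ℂ)
    (h1 : Z₁ - A * Z₁ * B = C₁)
    (h2 : Z₂ - (ε : ℂ) • (A * Z₂ * B.map (starRingEnd ℂ)) = C₂) :
    (Z₁.map cq + Z₂.map cq * jq • (1 : Matrix (Fin n) (Fin n) ℍ[ℝ])) -
        A.map cq *
          ((Z₁.map cq + Z₂.map cq * jq • (1 : Matrix (Fin n) (Fin n) ℍ[ℝ])).map σ) *
          B.map cq =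
      C₁.map cq + C₂.map cq * jq • (1 : Matrix (Fin n) (Fin n) ℍ[ℝ]) :=
  complex_pair_gives_quaternion_solution_general ε σ hσ A B C₁ C₂ Z₁ Z₂ h1 h2
end
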